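/- arXiv:2310.17217 — 3 statements merged into one kernel-verified Lean document; each statement's English description precedes it below -/
import Mathlib

section
/- Let f : ℝ → ℝ be strictly increasing on [0,1]. Then every f-optimal distribution p_f is weakly decreasing along the sample order: for all indices i < j, p_f(i) ≥ p_f(j). -/
/-- The data distribution on ℕ: strictly decreasing, positive, and summing to 1. -/
def IsDataDist (p : ℕ → ℝ) : Prop :=
  (∀ i j : ℕ, i < j → p i > p j) ∧ (∀ i, p i > 0) ∧ (∑' i, p i = 1)

/-- A distribution on ℕ: nonnegative and summing to 1. -/
def IsDist (q : ℕ → ℝ) : Prop :=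
  (∀ i, 0 ≤ q i) ∧ (∑' i, q i = 1)

/-- The loss of distribution `q` under criterion `f`, w.r.t. data distribution `pdata`. -/
noncomputable def lossF (pdata : ℕ → ℝ) (f : ℝ → ℝ) (q : ℕ → ℝ) : ℝ :=
  -∑' i, pdata i * f (q i)

/-- `p` is `f`-optimal: it is a distribution minimizing the loss over all distributions. -/
def IsOptimal (pdata : ℕ → ℝ) (f : ℝ → ℝ) (p : ℕ → ℝ) : Prop :=
  IsDist p ∧ ∀ q : ℕ → ℝ, IsDist q → lossF pdata f p ≤ lossF pdata f q

/-!
If `p i < p j` for some `i < j`, swapping the two values gives another distribution whose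
loss is smaller by `(pdata i - pdata j) * (f (p j) - f (p i)) > 0`, contradicting optimality.
All series involved converge because `f` is monotone, hence bounded, on `[0, 1]`.
-/

open Set

theorem IsDataDist.isDist {p : ℕ → ℝ} (hp : IsDataDist p) : IsDist p :=
  ⟨fun i => (hp.2.1 i).le, hp.2.2⟩

theorem IsDist.summable {q : ℕ → ℝ} (hq : IsDist q) : Summable q := by
  by_contra h
  simpa [tsum_eq_zero_of_not_summable h] using hq.2

theorem IsDist.mem_Icc {q : ℕ → ℝ} (hq : IsDist q) (k : ℕ) : q k ∈ Icc (0 : ℝ) 1 :=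
  ⟨hq.1 k, hq.2 ▸ hq.summable.le_tsum k fun n _ => hq.1 n⟩

theorem IsDist.comp_equiv {q : ℕ → ℝ} (hq : IsDist q) (e : ℕ ≃ ℕ) : IsDist (q ∘ e) :=
  ⟨fun k => hq.1 (e k), (e.tsum_eq q).trans hq.2⟩

theorem MonotoneOn.abs_le_max_of_mem_Icc {f : ℝ → ℝ} {a b x : ℝ} (hf : MonotoneOn f (Icc a b))
    (hx : x ∈ Icc a b) : |f x| ≤ max |f a| |f b| :=
  have hab : a ≤ b := hx.1.trans hx.2
  abs_le_max_abs_abs (hf (left_mem_Icc.2 hab) hx hx.1) (hf hx (right_mem_Icc.2 hab) hx.2)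

theorem summable_mul_comp_of_monotoneOn {w r : ℕ → ℝ} {f : ℝ → ℝ} (hw : Summable w)
    (hw₀ : ∀ k, 0 ≤ w k) (hf : MonotoneOn f (Icc 0 1)) (hr : ∀ k, r k ∈ Icc (0 : ℝ) 1) :
    Summable fun k => w k * f (r k) :=
  .of_norm_bounded (hw.mul_right (max |f 0| |f 1|)) fun k => by
    rw [norm_mul, Real.norm_of_nonneg (hw₀ k), Real.norm_eq_abs]
    exact mul_le_mul_of_nonneg_left (hf.abs_le_max_of_mem_Icc (hr k)) (hw₀ k)

theorem tsum_mul_comp_swap_sub {α : Type*} [DecidableEq α] {w a : α → ℝ} {i j : α} (hij : i ≠ j)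
    (ha : Summable fun k => w k * a k) (hswap : Summable fun k => w k * a (Equiv.swap i j k)) :
    ∑' k, w k * a (Equiv.swap i j k) - ∑' k, w k * a k = (w i - w j) * (a j - a i) := by
  have hsupp : ∀ k ∉ ({i, j} : Finset α), w k * a (Equiv.swap i j k) - w k * a k = 0 := by
    intro k hk
    simp only [Finset.mem_insert, Finset.mem_singleton, not_or] at hk
    rw [Equiv.swap_apply_of_ne_of_ne hk.1 hk.2, sub_self]
  rw [← hswap.tsum_sub ha, tsum_eq_sum hsupp, Finset.sum_pair hij, Equiv.swap_apply_left,
    Equiv.swap_apply_right]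
  ring

theorem lossF_comp_swap {w p : ℕ → ℝ} {f : ℝ → ℝ} (hw : Summable w) (hw₀ : ∀ k, 0 ≤ w k)
    (hf : MonotoneOn f (Icc 0 1)) (hp : IsDist p) {i j : ℕ} (hij : i ≠ j) :
    lossF w f (p ∘ Equiv.swap i j) = lossF w f p - (w i - w j) * (f (p j) - f (p i)) := by
  have key := tsum_mul_comp_swap_sub (a := f ∘ p) hij
    (summable_mul_comp_of_monotoneOn hw hw₀ hf hp.mem_Icc)
    (summable_mul_comp_of_monotoneOn hw hw₀ hf (hp.comp_equiv _).mem_Icc)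
  simp only [Function.comp_apply] at key
  simp only [lossF, Function.comp_apply]
  linarith

/-- Paper's Theorem 1: for strictly increasing `f` on `[0,1]`, any `f`-optimal
distribution is weakly decreasing along the sample order. -/
theorem optimal_monotone
    (pdata : ℕ → ℝ) (hdata : IsDataDist pdata)
    (f : ℝ → ℝ) (hf : StrictMonoOn f (Set.Icc (0 : ℝ) 1))
    (p : ℕ → ℝ) (hp : IsOptimal pdata f p) :
    ∀ i j : ℕ, i < j → p i ≥ p j := by
  intro i j hij
  by_contra! hlt
  have hgain : 0 < (pdata i - pdata j) * (f (p j) - f (p i)) :=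
    mul_pos (sub_pos.2 (hdata.1 i j hij)) (sub_pos.2 (hf (hp.1.mem_Icc i) (hp.1.mem_Icc j) hlt))
  have hswap := lossF_comp_swap hdata.isDist.summable hdata.isDist.1 hf.monotoneOn hp.1 hij.ne
  linarith [hp.2 _ (hp.1.comp_equiv (Equiv.swap i j))]
end

section
/- Let f : ℝ → ℝ be convex and monotone increasing on [0,1]. Then the one-hot distribution δ_0 (with δ_0(0) = 1 and δ_0(i) = 0 for i > 0) is f-optimal: L_f(δ_0) ≤ L_f(q) for every distribution q. -/
/-- Existence direction of the paper's Theorem 2: for a convex, monotone increasing `f`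
on `[0,1]`, the one-hot distribution concentrated on the most probable sample
minimizes the loss over all distributions. -/
theorem one_hot_optimal
    (pdata : ℕ → ℝ) (hdata : IsDataDist pdata)
    (f : ℝ → ℝ)
    (hconv : ConvexOn ℝ (Set.Icc (0 : ℝ) 1) f)
    (hmono : MonotoneOn f (Set.Icc (0 : ℝ) 1)) :
    ∀ q : ℕ → ℝ, IsDist q →
      lossF pdata f (fun i => if i = 0 then (1 : ℝ) else 0) ≤ lossF pdata f q := by
  intro q hq
  obtain ⟨hpdec, hppos, hpsum⟩ := hdata
  obtain ⟨hq0, hqsum⟩ := hq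
  have hpS : Summable pdata := by
    by_contra h
    rw [tsum_eq_zero_of_not_summable h] at hpsum; norm_num at hpsum
  have hqS : Summable q := by
    by_contra h
    rw [tsum_eq_zero_of_not_summable h] at hqsum; norm_num at hqsum
  have hqle1 : ∀ i, q i ≤ 1 := fun i => hqsum ▸ Summable.le_tsum hqS i (fun j _ => hq0 j)
  have hqmem : ∀ i, q i ∈ Set.Icc (0:ℝ) 1 := fun i => ⟨hq0 i, hqle1 i⟩
  have h0mem : (0:ℝ) ∈ Set.Icc (0:ℝ) 1 := by norm_num
  have h1mem : (1:ℝ) ∈ Set.Icc (0:ℝ) 1 := by norm_num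
  have hple : ∀ i, pdata i ≤ pdata 0 := by
    intro i
    rcases Nat.eq_zero_or_pos i with h | h
    · rw [h]
    · exact le_of_lt (hpdec 0 i h)
  have hppos' : ∀ i, (0:ℝ) ≤ pdata i := fun i => le_of_lt (hppos i)
  -- convexity bound
  have hconvb : ∀ i, f (q i) ≤ (1 - q i) * f 0 + q i * f 1 := by
    intro i
    have := hconv.2 h0mem h1mem (sub_nonneg.mpr (hqle1 i)) (hq0 i) (by ring)
    simpa [smul_eq_mul] using this
  have hfb : ∀ x ∈ Set.Icc (0:ℝ) 1, |f x| ≤ max |f 0| |f 1| := by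
    intro x hx
    rw [abs_le]
    constructor
    · calc -(max |f 0| |f 1|) ≤ -|f 0| := by simp [le_max_left]
        _ ≤ f 0 := neg_abs_le _
        _ ≤ f x := hmono h0mem hx hx.1
    · calc f x ≤ f 1 := hmono hx h1mem hx.2
        _ ≤ |f 1| := le_abs_self _
        _ ≤ max |f 0| |f 1| := le_max_right _ _
  -- summability of pdata i * f (g i) for g mapping into [0,1]
  have hSg : ∀ g : ℕ → ℝ, (∀ i, g i ∈ Set.Icc (0:ℝ) 1) → Summable (fun i => pdata i * f (g i)) := by
    intro g hg
    apply Summable.of_abs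
    apply Summable.of_nonneg_of_le (fun i => abs_nonneg _)
      (fun i => ?_) (hpS.mul_right (max |f 0| |f 1|))
    rw [abs_mul, abs_of_nonneg (hppos' i)]
    exact mul_le_mul_of_nonneg_left (hfb _ (hg i)) (hppos' i)
  have hSq := hSg q hqmem
  have hSd := hSg (fun i => if i = 0 then (1:ℝ) else 0)
    (fun i => by by_cases h : i = 0 <;> simp [h] <;> norm_num)
  have hSpq : Summable (fun i => pdata i * q i) :=
    Summable.of_nonneg_of_le (fun i => mul_nonneg (hppos' i) (hq0 i))
      (fun i => mul_le_mul_of_nonneg_right (hple i) (hq0 i)) (hqS.mul_left (pdata 0))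
  have hf01 : f 0 ≤ f 1 := hmono h0mem h1mem zero_le_one
  -- the one-hot sum equals f 0 + (f 1 - f 0) * pdata 0
  have hδ : (∑' i, pdata i * f (if i = 0 then (1:ℝ) else 0))
      = f 0 + (f 1 - f 0) * pdata 0 := by
    have heq : ∀ i : ℕ, pdata i * f (if i = 0 then (1:ℝ) else 0)
        = pdata i * f 0 + (if i = 0 then (f 1 - f 0) * pdata 0 else 0) := by
      intro i; by_cases h : i = 0 <;> simp [h] <;> ring
    rw [tsum_congr heq, Summable.tsum_add (hpS.mul_right (f 0))
      ((hasSum_ite_eq 0 ((f 1 - f 0) * pdata 0)).summable)]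
    rw [tsum_mul_right, hpsum, tsum_ite_eq]
    ring
  -- the main bound
  have hmain : (∑' i, pdata i * f (q i)) ≤ f 0 + (f 1 - f 0) * pdata 0 := by
    have step1 : (∑' i, pdata i * f (q i))
        ≤ ∑' i, (pdata i * f 0 + (f 1 - f 0) * (pdata i * q i)) := by
      apply Summable.tsum_le_tsum _ hSq ((hpS.mul_right (f 0)).add (hSpq.mul_left _))
      intro i
      have := mul_le_mul_of_nonneg_left (hconvb i) (hppos' i)
      calc pdata i * f (q i) ≤ pdata i * ((1 - q i) * f 0 + q i * f 1) := this
        _ = pdata i * f 0 + (f 1 - f 0) * (pdata i * q i) := by ring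
    have step2 : (∑' i, (pdata i * f 0 + (f 1 - f 0) * (pdata i * q i)))
        = f 0 + (f 1 - f 0) * ∑' i, pdata i * q i := by
      rw [Summable.tsum_add (hpS.mul_right (f 0)) (hSpq.mul_left _), tsum_mul_right, hpsum,
        tsum_mul_left]
      ring
    have step3 : (∑' i, pdata i * q i) ≤ pdata 0 := by
      calc (∑' i, pdata i * q i) ≤ ∑' i, pdata 0 * q i :=
            Summable.tsum_le_tsum (fun i => mul_le_mul_of_nonneg_right (hple i) (hq0 i))
              hSpq (hqS.mul_left _)
        _ = pdata 0 := by rw [tsum_mul_left, hqsum, mul_one]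
    calc (∑' i, pdata i * f (q i)) ≤ _ := step1
      _ = f 0 + (f 1 - f 0) * ∑' i, pdata i * q i := step2
      _ ≤ f 0 + (f 1 - f 0) * pdata 0 := by
          have := mul_le_mul_of_nonneg_left step3 (sub_nonneg.mpr hf01)
          linarith
  simp only [lossF, neg_le_neg_iff]
  rw [hδ]
  exact hmain
end

section
/- Let f : ℝ → ℝ be strictly increasing on [0,1], let q be a distribution, and suppose there exist indices i < j with q(i) < q(j). Define q' to agree with q everywhere except q'(i) = q(j) and q'(j) = q(i). Then q' is a distribution and L_f(q') < L_f(q); more precisely, L_f(q') = L_f(q) + (p_data(j) - p_data(i)) · (f(q(j)) - f(q(i))). -/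
/-- The swap lemma from the paper's proof of Theorem 1: swapping two out-of-order
probability values yields a distribution and strictly decreases the loss, with the
exact loss difference `(p_data j - p_data i) * (f (q j) - f (q i))`. -/
theorem swap_decreases_loss
    (pdata : ℕ → ℝ) (hdata : IsDataDist pdata)
    (f : ℝ → ℝ) (hf : StrictMonoOn f (Set.Icc (0 : ℝ) 1))
    (q : ℕ → ℝ) (hq : IsDist q)
    (i j : ℕ) (hij : i < j) (hlt : q i < q j) :
    IsDist (fun k => if k = i then q j else if k = j then q i else q k) ∧
    lossF pdata f (fun k => if k = i then q j else if k = j then q i else q k) =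
      lossF pdata f q + (pdata j - pdata i) * (f (q j) - f (q i)) ∧
    lossF pdata f (fun k => if k = i then q j else if k = j then q i else q k) <
      lossF pdata f q := by
  classical
  set q' : ℕ → ℝ := fun k => if k = i then q j else if k = j then q i else q k with hq'
  have hne : i ≠ j := hij.ne
  have hq'eq : q' = q ∘ (Equiv.swap i j) := by
    funext k
    simp only [q', Function.comp, Equiv.swap_apply_def]
    split_ifs <;> rfl
  have hqsum : Summable q := by
    by_contra h
    have := tsum_eq_zero_of_not_summable h
    rw [hq.2] at this; norm_num at this
  have hq'sum : Summable q' := by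
    rw [hq'eq]; exact (Equiv.swap i j).summable_iff.mpr hqsum
  have hq'tsum : ∑' k, q' k = 1 := by
    rw [hq'eq]
    calc ∑' k, (q ∘ (Equiv.swap i j)) k = ∑' k, q k := (Equiv.swap i j).tsum_eq q
      _ = 1 := hq.2
  have hq'nonneg : ∀ k, 0 ≤ q' k := by
    intro k
    simp only [q']
    split_ifs <;> exact hq.1 _
  have hq'dist : IsDist q' := ⟨hq'nonneg, hq'tsum⟩
  -- each value ≤ 1
  have hle1 : ∀ k, q k ≤ 1 := by
    intro k
    have := Summable.le_tsum hqsum k (fun m _ => hq.1 m)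
    rwa [hq.2] at this
  have hmem : ∀ k, q k ∈ Set.Icc (0:ℝ) 1 := fun k => ⟨hq.1 k, hle1 k⟩
  have hmem' : ∀ k, q' k ∈ Set.Icc (0:ℝ) 1 := by
    intro k; simp only [q']; split_ifs <;> exact hmem _
  have hpsum : Summable pdata := by
    by_contra h
    have := tsum_eq_zero_of_not_summable h
    rw [hdata.2.2] at this; norm_num at this
  -- bound for f values
  set C : ℝ := max |f 0| |f 1| with hC
  have hbound : ∀ x ∈ Set.Icc (0:ℝ) 1, |f x| ≤ C := by
    intro x hx
    have h0 : f 0 ≤ f x := hf.monotoneOn (Set.left_mem_Icc.mpr zero_le_one) hx hx.1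
    have h1 : f x ≤ f 1 := hf.monotoneOn hx (Set.right_mem_Icc.mpr zero_le_one) hx.2
    rcases abs_le.mp (le_refl |f 0|) with _
    rw [abs_le]
    constructor
    · calc -C ≤ -|f 0| := by simp [hC]
        _ ≤ f 0 := neg_abs_le _
        _ ≤ f x := h0
    · calc f x ≤ f 1 := h1
        _ ≤ |f 1| := le_abs_self _
        _ ≤ C := le_max_right _ _
  have hsummg : ∀ (r : ℕ → ℝ), (∀ k, r k ∈ Set.Icc (0:ℝ) 1) →
      Summable (fun k => pdata k * f (r k)) := by
    intro r hr
    apply Summable.of_abs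
    apply Summable.of_nonneg_of_le (fun k => abs_nonneg _)
      (fun k => ?_) (hpsum.mul_right C)
    rw [abs_mul, abs_of_pos (hdata.2.1 k)]
    exact mul_le_mul_of_nonneg_left (hbound _ (hr k)) (hdata.2.1 k).le
  have hg : Summable (fun k => pdata k * f (q k)) := hsummg q hmem
  have hg' : Summable (fun k => pdata k * f (q' k)) := hsummg q' hmem'
  -- difference supported on {i, j}
  have hdiff : (∑' k, pdata k * f (q' k)) - (∑' k, pdata k * f (q k)) =
      (pdata i - pdata j) * (f (q j) - f (q i)) := by
    rw [← Summable.tsum_sub hg' hg]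
    rw [tsum_eq_sum (s := ({i, j} : Finset ℕ)) (f := fun k => pdata k * f (q' k) - pdata k * f (q k)) ?_]
    · rw [Finset.sum_pair hne]
      simp only [q', if_pos, if_neg hne.symm, ite_true]
      ring
    · intro k hk
      simp only [Finset.mem_insert, Finset.mem_singleton, not_or] at hk
      simp only [q', if_neg hk.1, if_neg hk.2]
      ring
  have hqi : f (q i) < f (q j) := hf (hmem i) (hmem j) hlt
  have hpij : pdata j < pdata i := hdata.1 i j hij
  have hloss : lossF pdata f q' = lossF pdata f q + (pdata j - pdata i) * (f (q j) - f (q i)) := by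
    simp only [lossF]
    have := hdiff
    nlinarith [hdiff]
  refine ⟨hq'dist, hloss, ?_⟩
  rw [hloss]
  nlinarith
end
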